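/- arXiv:2602.10587 — 4 statements merged into one kernel-verified Lean document; each statement's English description precedes it below -/
import Mathlib

section
/- There exists a constant C > 0, depending only on d and C_u, such that for every t ∈ (0,1) and every y ∈ ℝ^d, p_t(y) ≤ C · exp(−((‖y‖_∞ − m_t)₊)² / (2σ_t²)). -/
/-! With `s = t(2-t)` and `m = 1-t`, the Gaussian kernel factorizes over coordinates and
`0 ≤ p₀ ≤ C_u` vanishes off the cube, so `p_t(y) ≤ C_u ∏ᵢ ∫_{[-1,1]} φ_s(yᵢ - m u) du`, where
`φ_s` is the one-dimensional heat kernel of variance `s`.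

For `|u| ≤ 1` one has `(z - m u)² ≥ ((|z| - m)₊)² + m² (u - u₀)²`, with `u₀` the projection of
`z / m` onto `[-1, 1]`. Integrating the resulting Gaussian in `u` over all of `ℝ` bounds a factor by
`exp(-((|z| - m)₊)² / 2s) / m`, while bounding `φ_s` by its maximum `(2πs)^{-1/2}` gives
`2 (2πs)^{-1/2} exp(-((|z| - m)₊)² / 2s)`. The first bound is good for `t ≤ 1/2`, the second for
`t > 1/2` (then `2πs > 1`), so every factor is at most `2 exp(-((|yᵢ| - m)₊)² / 2s) ≤ 2`; keeping
only the factor of a coordinate with `|yᵢ| = ‖y‖_∞` gives the claim with `C = 2^d C_u`. -/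

open MeasureTheory Real Set ProbabilityTheory

noncomputable def heatKernel (s x : ℝ) : ℝ := (2 * π * s) ^ (-(1 : ℝ) / 2) * exp (-x ^ 2 / (2 * s))

section HeatKernel

variable {s : ℝ}

theorem heatKernel_nonneg (hs : 0 ≤ s) (x : ℝ) : 0 ≤ heatKernel s x := by
  unfold heatKernel; positivity

@[fun_prop]
theorem continuous_heatKernel (s : ℝ) : Continuous (heatKernel s) := by
  unfold heatKernel; fun_prop

theorem heatKernel_eq_gaussianPDFReal (hs : 0 ≤ s) :
    heatKernel s = gaussianPDFReal 0 s.toNNReal := by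
  ext x
  rw [heatKernel, gaussianPDFReal, Real.coe_toNNReal _ hs, sqrt_eq_rpow, ← rpow_neg (by positivity),
    sub_zero]
  norm_num

theorem integral_heatKernel (hs : 0 < s) : ∫ x, heatKernel s x = 1 := by
  rw [heatKernel_eq_gaussianPDFReal hs.le]
  exact integral_gaussianPDFReal_eq_one 0 (by simpa using hs)

theorem integrable_heatKernel (hs : 0 ≤ s) : Integrable (heatKernel s) := by
  rw [heatKernel_eq_gaussianPDFReal hs]
  exact integrable_gaussianPDFReal 0 _

theorem heatKernel_zero_le_one (hs : 1 ≤ 2 * π * s) : heatKernel s 0 ≤ 1 := by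
  simpa [heatKernel] using rpow_le_one_of_one_le_of_nonpos hs (by norm_num)

theorem heatKernel_le_exp_mul_heatKernel (hs : 0 ≤ s) {a x y : ℝ} (h : a ^ 2 + y ^ 2 ≤ x ^ 2) :
    heatKernel s x ≤ exp (-a ^ 2 / (2 * s)) * heatKernel s y := by
  rw [heatKernel, heatKernel, mul_left_comm, ← exp_add, ← add_div, ← neg_add]
  gcongr

theorem integral_heatKernel_mul_sub {m : ℝ} (hs : 0 < s) (hm : 0 < m) (u₀ : ℝ) :
    ∫ u, heatKernel s (m * (u - u₀)) = m⁻¹ := by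
  rw [integral_sub_right_eq_self (fun u => heatKernel s (m * u)), Measure.integral_comp_mul_left,
    integral_heatKernel hs, smul_eq_mul, mul_one, abs_of_pos (inv_pos.2 hm)]

end HeatKernel

theorem sq_max_abs_sub_add_sq_le {m z u : ℝ} (hm : 0 < m) (hu : u ∈ Icc (-1) 1) :
    max (|z| - m) 0 ^ 2 + (m * (u - max (-1) (min 1 (z / m)))) ^ 2 ≤ (z - m * u) ^ 2 := by
  obtain ⟨hu₁, hu₂⟩ := hu
  rcases le_or_gt |z| m with hz | hz
  · obtain ⟨hz₁, hz₂⟩ := abs_le.1 hz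
    have hclamp : max (-1) (min 1 (z / m)) = z / m := by
      rw [min_eq_right ((div_le_one hm).2 hz₂), max_eq_right ((le_div_iff₀ hm).2 (by linarith))]
    rw [max_eq_right (by linarith), hclamp, mul_sub, mul_div_cancel₀ _ hm.ne']
    nlinarith
  rcases lt_abs.1 hz with hz | hz
  · have hclamp : max (-1) (min 1 (z / m)) = 1 := by
      rw [min_eq_left ((le_div_iff₀ hm).2 (by linarith)), max_eq_right (by norm_num)]
    rw [abs_of_pos (hm.trans hz), max_eq_left (by linarith), hclamp]
    nlinarith [mul_nonneg (mul_nonneg hm.le (sub_nonneg.2 hu₂)) (sub_nonneg.2 hz.le)]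
  · have hclamp : max (-1) (min 1 (z / m)) = -1 := by
      rw [min_eq_right ((div_le_one hm).2 (by linarith)),
        max_eq_left ((div_le_iff₀ hm).2 (by linarith))]
    rw [abs_of_neg (by linarith), max_eq_left (by linarith), hclamp]
    nlinarith [mul_nonneg (mul_nonneg hm.le (neg_le_iff_add_nonneg.1 hu₁)) (sub_nonneg.2 hz.le)]

section IntervalBounds

variable {s m : ℝ}

theorem setIntegral_heatKernel_le_exp_div (hs : 0 < s) (hm : 0 < m) (z : ℝ) :
    ∫ u in Icc (-1) 1, heatKernel s (z - m * u) ≤ exp (-max (|z| - m) 0 ^ 2 / (2 * s)) / m := by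
  set u₀ := max (-1) (min 1 (z / m))
  have hint : Integrable fun u => heatKernel s (m * (u - u₀)) :=
    ((integrable_heatKernel hs.le).comp_mul_left' hm.ne').comp_sub_right u₀
  calc ∫ u in Icc (-1) 1, heatKernel s (z - m * u)
      ≤ ∫ u in Icc (-1) 1, exp (-max (|z| - m) 0 ^ 2 / (2 * s)) * heatKernel s (m * (u - u₀)) :=
        setIntegral_mono_on (by fun_prop : Continuous _).integrableOn_Icc
          (hint.const_mul _).integrableOn measurableSet_Icc
          fun u hu => heatKernel_le_exp_mul_heatKernel hs.le (sq_max_abs_sub_add_sq_le hm hu)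
    _ ≤ ∫ u, exp (-max (|z| - m) 0 ^ 2 / (2 * s)) * heatKernel s (m * (u - u₀)) :=
        setIntegral_le_integral (hint.const_mul _)
          (.of_forall fun u => mul_nonneg (exp_pos _).le (heatKernel_nonneg hs.le _))
    _ = exp (-max (|z| - m) 0 ^ 2 / (2 * s)) / m := by
        rw [integral_const_mul, integral_heatKernel_mul_sub hs hm, ← div_eq_mul_inv]

theorem setIntegral_heatKernel_le_two_mul (hs : 0 < s) (hm : 0 < m) (z : ℝ) :
    ∫ u in Icc (-1) 1, heatKernel s (z - m * u)
      ≤ 2 * (exp (-max (|z| - m) 0 ^ 2 / (2 * s)) * heatKernel s 0) := by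
  calc ∫ u in Icc (-1) 1, heatKernel s (z - m * u)
      ≤ ∫ _ in Icc (-1) 1, exp (-max (|z| - m) 0 ^ 2 / (2 * s)) * heatKernel s 0 :=
        setIntegral_mono_on (by fun_prop : Continuous _).integrableOn_Icc
          (integrableOn_const measure_Icc_lt_top.ne) measurableSet_Icc
          fun u hu => heatKernel_le_exp_mul_heatKernel hs.le
            (by simpa using
              le_of_add_le_of_nonneg_left (sq_max_abs_sub_add_sq_le hm hu) (sq_nonneg _))
    _ = 2 * (exp (-max (|z| - m) 0 ^ 2 / (2 * s)) * heatKernel s 0) := by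
        rw [setIntegral_const, smul_eq_mul, Measure.real, Real.volume_Icc]
        norm_num

end IntervalBounds

theorem setIntegral_heatKernel_le {t : ℝ} (ht : t ∈ Ioo 0 1) (z : ℝ) :
    ∫ u in Icc (-1) 1, heatKernel (t * (2 - t)) (z - (1 - t) * u)
      ≤ 2 * exp (-max (|z| - (1 - t)) 0 ^ 2 / (2 * (t * (2 - t)))) := by
  obtain ⟨ht₀, ht₁⟩ := ht
  have hs : 0 < t * (2 - t) := by nlinarith
  rcases le_or_gt t (1 / 2) with ht₂ | ht₂
  · refine (setIntegral_heatKernel_le_exp_div hs (by linarith) z).trans ?_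
    rw [div_le_iff₀ (by linarith)]
    nlinarith [exp_pos (-max (|z| - (1 - t)) 0 ^ 2 / (2 * (t * (2 - t))))]
  · refine (setIntegral_heatKernel_le_two_mul hs (by linarith) z).trans ?_
    have := heatKernel_zero_le_one (s := t * (2 - t)) (by nlinarith [pi_gt_three])
    gcongr
    exact mul_le_of_le_one_right (exp_pos _).le this

theorem prod_setIntegral_heatKernel_le {ι : Type*} [Fintype ι] {t : ℝ} (ht : t ∈ Ioo 0 1)
    (y : ι → ℝ) (i₀ : ι) :
    ∏ i, ∫ u in Icc (-1) 1, heatKernel (t * (2 - t)) (y i - (1 - t) * u)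
      ≤ 2 ^ Fintype.card ι * exp (-max (|y i₀| - (1 - t)) 0 ^ 2 / (2 * (t * (2 - t)))) := by
  have hs : 0 < t * (2 - t) := by nlinarith [ht.1, ht.2]
  set q : ι → ℝ := fun i => max (|y i| - (1 - t)) 0 ^ 2 / (2 * (t * (2 - t)))
  calc ∏ i, ∫ u in Icc (-1) 1, heatKernel (t * (2 - t)) (y i - (1 - t) * u)
      ≤ ∏ i, 2 * exp (-q i) :=
        Finset.prod_le_prod (fun i _ => setIntegral_nonneg measurableSet_Icc
          fun u _ => heatKernel_nonneg hs.le _) fun i _ => by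
            simpa [q, neg_div] using setIntegral_heatKernel_le ht (y i)
    _ = 2 ^ Fintype.card ι * exp (-∑ i, q i) := by
        rw [Finset.prod_mul_distrib, Finset.prod_const, ← exp_sum, Finset.sum_neg_distrib,
          Finset.card_univ]
    _ ≤ 2 ^ Fintype.card ι * exp (-q i₀) := by
        gcongr
        exact Finset.single_le_sum (fun i _ => by positivity) (Finset.mem_univ i₀)
    _ = 2 ^ Fintype.card ι * exp (-max (|y i₀| - (1 - t)) 0 ^ 2 / (2 * (t * (2 - t)))) := by
        rw [neg_div]

section EuclideanProduct

variable {ι : Type*} [Fintype ι]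

theorem EuclideanSpace.integrable_fintype_prod {f : ι → ℝ → ℝ} (hf : ∀ i, Integrable (f i)) :
    Integrable fun x : EuclideanSpace ℝ ι => ∏ i, f i (x i) := by
  rw [← (PiLp.volume_preserving_toLp ι).integrable_comp_emb
    (MeasurableEquiv.toLp 2 _).measurableEmbedding]
  exact Integrable.fintype_prod hf

theorem EuclideanSpace.integral_fintype_prod_eq_prod (f : ι → ℝ → ℝ) :
    ∫ x : EuclideanSpace ℝ ι, ∏ i, f i (x i) = ∏ i, ∫ x, f i x := by
  rw [← (PiLp.volume_preserving_toLp ι).integral_comp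
    (MeasurableEquiv.toLp 2 _).measurableEmbedding]
  exact integral_fintype_prod_volume_eq_prod f

theorem rpow_mul_exp_neg_norm_sq_eq_prod_heatKernel {s : ℝ} (hs : 0 ≤ s)
    (x : EuclideanSpace ℝ ι) :
    (2 * π * s) ^ (-(Fintype.card ι : ℝ) / 2) * exp (-‖x‖ ^ 2 / (2 * s))
      = ∏ i, heatKernel s (x i) := by
  simp only [heatKernel]
  rw [EuclideanSpace.norm_sq_eq, Finset.prod_mul_distrib, Finset.prod_const, Finset.card_univ,
    ← rpow_natCast, ← rpow_mul (by positivity), ← exp_sum, neg_div, ← Finset.sum_div,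
    ← Finset.sum_neg_distrib]
  simp only [Real.norm_eq_abs, sq_abs]
  ring_nf

theorem integral_mul_gaussian_le_mul_prod_setIntegral {p : EuclideanSpace ℝ ι → ℝ} {M s m : ℝ}
    (hs : 0 ≤ s)
    (hp_out : ∀ u : EuclideanSpace ℝ ι, (∃ i, 1 < |u i|) → p u = 0)
    (hp_cube : ∀ u : EuclideanSpace ℝ ι, (∀ i, |u i| ≤ 1) → 0 ≤ p u ∧ p u ≤ M)
    (y : EuclideanSpace ℝ ι) :
    ∫ u, p u * ((2 * π * s) ^ (-(Fintype.card ι : ℝ) / 2) * exp (-‖y - m • u‖ ^ 2 / (2 * s)))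
      ≤ M * ∏ i, ∫ w in Icc (-1) 1, heatKernel s (y i - m * w) := by
  set g : ι → ℝ → ℝ := fun i => (Icc (-1) 1).indicator fun w => heatKernel s (y i - m * w)
  have hg_nonneg : ∀ i w, 0 ≤ g i w :=
    fun i => indicator_nonneg fun w _ => heatKernel_nonneg hs _
  have hM : 0 ≤ M := by
    obtain ⟨h0, h1⟩ := hp_cube 0 (by simp)
    exact h0.trans h1
  have hp_nonneg : ∀ u, 0 ≤ p u := by
    intro u
    by_cases hu : ∀ i, |u i| ≤ 1
    · exact (hp_cube u hu).1
    · push Not at hu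
      exact (hp_out u hu).ge
  have hle : ∀ u, p u * ((2 * π * s) ^ (-(Fintype.card ι : ℝ) / 2) *
      exp (-‖y - m • u‖ ^ 2 / (2 * s))) ≤ M * ∏ i, g i (u i) := by
    intro u
    by_cases hu : ∀ i, |u i| ≤ 1
    · have hg : ∀ i, g i (u i) = heatKernel s (y i - m * u i) :=
        fun i => indicator_of_mem (show u i ∈ Icc (-1) 1 from abs_le.1 (hu i)) _
      rw [rpow_mul_exp_neg_norm_sq_eq_prod_heatKernel hs]
      simp only [hg, PiLp.sub_apply, PiLp.smul_apply, smul_eq_mul]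
      exact mul_le_mul_of_nonneg_right (hp_cube u hu).2
        (Finset.prod_nonneg fun i _ => heatKernel_nonneg hs _)
    · push Not at hu
      rw [hp_out u hu, zero_mul]
      exact mul_nonneg hM (Finset.prod_nonneg fun i _ => hg_nonneg i _)
  calc ∫ u, p u * ((2 * π * s) ^ (-(Fintype.card ι : ℝ) / 2) * exp (-‖y - m • u‖ ^ 2 / (2 * s)))
      ≤ ∫ u : EuclideanSpace ℝ ι, M * ∏ i, g i (u i) :=
        integral_mono_of_nonneg (.of_forall fun u => by have := hp_nonneg u; positivity)
          ((EuclideanSpace.integrable_fintype_prod fun i =>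
            ((continuous_heatKernel s).comp (by fun_prop)).integrableOn_Icc.integrable_indicator
              measurableSet_Icc).const_mul M)
          (.of_forall hle)
    _ = M * ∏ i, ∫ w in Icc (-1) 1, heatKernel s (y i - m * w) := by
        simp only [integral_const_mul, EuclideanSpace.integral_fintype_prod_eq_prod, g,
          integral_indicator measurableSet_Icc]

end EuclideanProduct

/-- **Upper Gaussian-type bound on the diffused density.**
For `m_t = 1 - t`, `σ_t = √(t(2-t))` and
`p_t(y) = ∫ p₀(u) (2π σ_t²)^{-d/2} exp(-‖y - m_t u‖²/(2σ_t²)) du`,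
there is a constant `C > 0` depending only on `d` and `C_u` such that
`p_t(y) ≤ C exp(-((‖y‖_∞ - m_t)₊)²/(2σ_t²))`. -/
theorem stmt_0 (d : ℕ) (hd : 1 ≤ d) (Cl Cu : ℝ) (hCl : 0 < Cl) (hClCu : Cl ≤ Cu) :
    ∃ C > (0 : ℝ), ∀ p0 : EuclideanSpace ℝ (Fin d) → ℝ,
      Measurable p0 →
      (∀ u : EuclideanSpace ℝ (Fin d), (∃ i, 1 < |u i|) → p0 u = 0) →
      (∀ u : EuclideanSpace ℝ (Fin d), (∀ i, |u i| ≤ 1) → Cl ≤ p0 u ∧ p0 u ≤ Cu) →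
      ∀ t ∈ Set.Ioo (0 : ℝ) 1, ∀ y : EuclideanSpace ℝ (Fin d),
        (∫ u : EuclideanSpace ℝ (Fin d),
            p0 u * ((2 * π * (t * (2 - t))) ^ (-(d : ℝ) / 2) *
              Real.exp (-‖y - (1 - t) • u‖ ^ 2 / (2 * (t * (2 - t))))))
          ≤ C * Real.exp (-(max ((⨆ i, |y i|) - (1 - t)) 0) ^ 2 / (2 * (t * (2 - t)))) := by
  have hCu : 0 < Cu := hCl.trans_le hClCu
  refine ⟨Cu * 2 ^ d, by positivity, ?_⟩
  rintro p0 - hp0_out hp0_cube t ht y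
  have : Nonempty (Fin d) := ⟨⟨0, hd⟩⟩
  obtain ⟨i₀, hi₀⟩ := exists_eq_ciSup_of_finite (f := fun i => |y i|)
  have hs : 0 ≤ t * (2 - t) := by nlinarith [ht.1, ht.2]
  calc _ ≤ Cu * ∏ i, ∫ w in Icc (-1) 1, heatKernel (t * (2 - t)) (y i - (1 - t) * w) := by
        simpa using integral_mul_gaussian_le_mul_prod_setIntegral hs hp0_out
          (fun u hu => ⟨hCl.le.trans (hp0_cube u hu).1, (hp0_cube u hu).2⟩) y
    _ ≤ Cu * (2 ^ d * exp (-max (|y i₀| - (1 - t)) 0 ^ 2 / (2 * (t * (2 - t))))) := by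
        gcongr
        simpa using prod_setIntegral_heatKernel_le ht (y ·) i₀
    _ = _ := by rw [← hi₀, mul_assoc]
end

section
/- There exists a constant c > 0, depending only on d and C_l, such that for every t ∈ (0,1) and every y ∈ ℝ^d, p_t(y) ≥ c · exp(−d · ((‖y‖_∞ − m_t)₊)² / σ_t²). -/
open MeasureTheory Real Set

/-! Write `m = 1 - t`, `σ² = t(2 - t)` and `M = (‖y‖_∞ - m)₊`. Clamping each `y_i / m` into
`[-1, 1]` and taking a box of side `σ` inside the cube next to the clamped point, every `u` in
the box has `|y_i - m u_i| ≤ M + mσ ≤ M + σ`, hence `‖y - m u‖² ≤ 2d(M² + σ²)`. On that box the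
integrand is therefore at least `C_l (2πσ²)^{-d/2} e^{-dM²/σ²} e^{-d}`, and the box has volume
`σ^d`, which exactly cancels the normalisation `σ^{-d}`. -/

theorem abs_sub_mul_clamp_le (x : ℝ) {m : ℝ} (hm : 0 < m) :
    |x - m * max (-1) (min 1 (x / m))| ≤ max (|x| - m) 0 := by
  rw [mul_max_of_nonneg _ _ hm.le, mul_min_of_nonneg _ _ hm.le, mul_div_cancel₀ _ hm.ne',
    mul_one, mul_neg_one, abs_le]
  constructor <;> rcases abs_cases x with ⟨_, _⟩ | ⟨_, _⟩ <;>
    rcases min_cases m x with ⟨_, _⟩ | ⟨_, _⟩ <;>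
    rcases max_cases (-m) (min m x) with ⟨_, _⟩ | ⟨_, _⟩ <;>
    linarith [le_max_left (|x| - m) 0, le_max_right (|x| - m) 0]

theorem exists_Icc_subset_Icc_forall_abs_sub_mul_le (x : ℝ) {m ℓ : ℝ} (hm : 0 < m)
    (hℓ : ℓ ≤ 2) : ∃ a, Icc a (a + ℓ) ⊆ Icc (-1) 1 ∧
      ∀ v ∈ Icc a (a + ℓ), |x - m * v| ≤ max (|x| - m) 0 + m * ℓ := by
  set w := max (-1) (min 1 (x / m))
  have hw₁ : -1 ≤ w := le_max_left _ _
  have hw₂ : w ≤ 1 := max_le (by norm_num) (min_le_left _ _)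
  refine ⟨min w (1 - ℓ), fun v ⟨hv₁, hv₂⟩ => ⟨?_, ?_⟩, fun v ⟨hv₁, hv₂⟩ => ?_⟩
  · linarith [le_min hw₁ (by linarith : (-1 : ℝ) ≤ 1 - ℓ)]
  · linarith [min_le_right w (1 - ℓ)]
  · have hwv : |w - v| ≤ ℓ := by
      rw [abs_le]; constructor
      · linarith [min_le_left w (1 - ℓ)]
      · linarith [le_min (by linarith : w - ℓ ≤ w) (by linarith : w - ℓ ≤ 1 - ℓ)]
    calc |x - m * v| = |(x - m * w) + m * (w - v)| := by ring_nf
      _ ≤ |x - m * w| + m * |w - v| := by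
        rw [← abs_of_pos hm, ← abs_mul, abs_of_pos hm]; exact abs_add_le _ _
      _ ≤ max (|x| - m) 0 + m * ℓ := by
        gcongr
        exact abs_sub_mul_clamp_le x hm

theorem EuclideanSpace.norm_sq_le_card_mul_sq {ι : Type*} [Fintype ι] (x : EuclideanSpace ℝ ι)
    {r : ℝ} (h : ∀ i, |x i| ≤ r) : ‖x‖ ^ 2 ≤ Fintype.card ι * r ^ 2 := by
  rw [EuclideanSpace.norm_sq_eq]
  calc ∑ i, ‖x i‖ ^ 2 ≤ ∑ _i : ι, r ^ 2 :=
        Finset.sum_le_sum fun i _ => pow_le_pow_left₀ (norm_nonneg _) (h i) 2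
    _ = Fintype.card ι * r ^ 2 := by simp

theorem EuclideanSpace.volume_preimage_ofLp_univ_pi {ι : Type*} [Fintype ι] (s : ι → Set ℝ) :
    volume (WithLp.ofLp ⁻¹' univ.pi s : Set (EuclideanSpace ℝ ι)) = ∏ i, volume (s i) := by
  rw [← volume_pi_pi]
  exact (EuclideanSpace.volume_preserving_symm_measurableEquiv_toLp ι).measure_preimage_equiv _

theorem mul_sqrt_pow_rpow_neg_div_two {a s : ℝ} (ha : 0 ≤ a) (hs : 0 < s) (n : ℕ) :
    (a * s) ^ (-(n : ℝ) / 2) * √s ^ n = a ^ (-(n : ℝ) / 2) := by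
  rw [sqrt_eq_rpow, ← rpow_mul_natCast hs.le, mul_rpow ha hs.le, mul_assoc, ← rpow_add hs]
  ring_nf
  simp

theorem exp_neg_mul_sq_div_mul_exp_neg_le {n s M r q : ℝ} (hn : 0 ≤ n) (hs : 0 < s)
    (hr₀ : 0 ≤ r) (hr : r ≤ √s) (hq : q ≤ n * (M + r) ^ 2) :
    exp (-n * M ^ 2 / s) * exp (-n) ≤ exp (-q / (2 * s)) := by
  have hr2 : r ^ 2 ≤ s := by
    calc r ^ 2 ≤ √s ^ 2 := pow_le_pow_left₀ hr₀ hr 2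
      _ = s := sq_sqrt hs.le
  have hq' : q ≤ 2 * n * M ^ 2 + 2 * n * s := by
    nlinarith [sq_nonneg (M - r)]
  rw [← exp_add, exp_le_exp]
  calc -n * M ^ 2 / s + -n = -(2 * n * M ^ 2 + 2 * n * s) / (2 * s) := by
        field_simp; ring
    _ ≤ -q / (2 * s) := by gcongr

theorem exp_neg_card_mul_le_exp_neg_norm_sub_smul_sq {ι : Type*} [Fintype ι]
    {y u : EuclideanSpace ℝ ι} {m s M : ℝ} (hs : 0 < s) (hm₀ : 0 ≤ m) (hm₁ : m ≤ 1)
    (h : ∀ i, |y i - m * u i| ≤ M + m * √s) :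
    exp (-Fintype.card ι * M ^ 2 / s) * exp (-Fintype.card ι) ≤
      exp (-‖y - m • u‖ ^ 2 / (2 * s)) :=
  exp_neg_mul_sq_div_mul_exp_neg_le (Nat.cast_nonneg _) hs (by positivity)
    (mul_le_of_le_one_left (sqrt_nonneg s) hm₁)
    (EuclideanSpace.norm_sq_le_card_mul_sq _ fun i => by simpa using h i)

theorem EuclideanSpace.volume_preimage_ofLp_pi_Icc_add {ι : Type*} [Fintype ι] (a : ι → ℝ)
    (ℓ : ℝ) : volume (WithLp.ofLp ⁻¹' univ.pi (fun i => Icc (a i) (a i + ℓ)) :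
      Set (EuclideanSpace ℝ ι)) = ENNReal.ofReal ℓ ^ Fintype.card ι := by
  rw [EuclideanSpace.volume_preimage_ofLp_univ_pi]
  simp [Real.volume_Icc]

theorem EuclideanSpace.exists_box_subset_cube_exp_le {ι : Type*} [Fintype ι]
    (y : EuclideanSpace ℝ ι) {m s : ℝ} (hm₀ : 0 < m) (hm₁ : m ≤ 1) (hs₀ : 0 < s) (hs₁ : s ≤ 4) :
    ∃ a : ι → ℝ, ∀ u ∈ (WithLp.ofLp ⁻¹' univ.pi fun i => Icc (a i) (a i + √s) :
        Set (EuclideanSpace ℝ ι)), (∀ i, |u i| ≤ 1) ∧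
      exp (-Fintype.card ι * max ((⨆ i, |y i|) - m) 0 ^ 2 / s) * exp (-Fintype.card ι) ≤
        exp (-‖y - m • u‖ ^ 2 / (2 * s)) := by
  have hs : √s ≤ 2 := sqrt_le_iff.2 ⟨zero_le_two, by linarith⟩
  choose a ha using fun i => exists_Icc_subset_Icc_forall_abs_sub_mul_le (y i) hm₀ hs
  refine ⟨a, fun u hu => ?_⟩
  simp only [mem_preimage, mem_univ_pi] at hu
  refine ⟨fun i => abs_le.2 ((ha i).1 (hu i)), exp_neg_card_mul_le_exp_neg_norm_sub_smul_sq
    hs₀ hm₀.le hm₁ fun i => ((ha i).2 _ (hu i)).trans ?_⟩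
  gcongr
  exact le_ciSup (f := fun j => |y j|) (Finite.bddAbove_range _) i

theorem EuclideanSpace.integrable_of_abs_le_of_eq_zero_outside_cube {ι : Type*} [Fintype ι]
    {f : EuclideanSpace ℝ ι → ℝ} (hf : AEStronglyMeasurable f) {C : ℝ}
    (hC : ∀ u : EuclideanSpace ℝ ι, (∀ i, |u i| ≤ 1) → |f u| ≤ C)
    (h₀ : ∀ u : EuclideanSpace ℝ ι, (∃ i, 1 < |u i|) → f u = 0) : Integrable f := by
  set K : Set (EuclideanSpace ℝ ι) := WithLp.ofLp ⁻¹' univ.pi fun _ => Icc (-1) 1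
  have hK : ∀ u, u ∈ K ↔ ∀ i, |u i| ≤ 1 := by
    simp only [K, mem_preimage, mem_univ_pi, mem_Icc, abs_le, implies_true]
  have hK_meas : MeasurableSet K :=
    (MeasurableSet.univ_pi fun _ => measurableSet_Icc).preimage (by fun_prop)
  have hK_fin : volume K ≠ ⊤ := by
    rw [EuclideanSpace.volume_preimage_ofLp_univ_pi]
    exact ENNReal.prod_ne_top fun _ _ => measure_Icc_lt_top.ne
  refine (Measure.integrableOn_of_bounded hK_fin hf (M := C) ?_)
    |>.integrable_of_forall_notMem_eq_zero fun u hu => h₀ u ?_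
  · exact ae_restrict_of_forall_mem hK_meas fun u hu => hC u ((hK u).1 hu)
  · simpa [hK] using hu

theorem mul_measureReal_le_integral_of_le_on {α : Type*} [MeasurableSpace α] {μ : Measure α}
    {f : α → ℝ} {S : Set α} {c : ℝ} (hf : Integrable f μ) (hf₀ : 0 ≤ᵐ[μ] f)
    (hS : MeasurableSet S) (hμS : μ S ≠ ⊤) (hc : ∀ x ∈ S, c ≤ f x) :
    c * μ.real S ≤ ∫ x, f x ∂μ :=
  (setIntegral_ge_of_const_le_real hS hμS hc hf.integrableOn).trans
    (setIntegral_le_integral hf hf₀)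

theorem MeasureTheory.Integrable.mul_gaussianKernel {E : Type*} [NormedAddCommGroup E]
    [NormedSpace ℝ E] [MeasurableSpace E] [BorelSpace E] {μ : Measure E} {f : E → ℝ}
    (hf : Integrable f μ) (y : E) (m A : ℝ) {s : ℝ} (hs : 0 ≤ s) :
    Integrable (fun u => f u * (A * exp (-‖y - m • u‖ ^ 2 / (2 * s)))) μ := by
  refine hf.mul_bdd (c := |A|) (by fun_prop : Continuous _).aestronglyMeasurable
    (.of_forall fun u => ?_)
  rw [norm_mul, norm_of_nonneg (exp_nonneg _), Real.norm_eq_abs]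
  exact mul_le_of_le_one_right (abs_nonneg A) (exp_le_one_iff.2 <|
    div_nonpos_of_nonpos_of_nonneg (neg_nonpos.2 (sq_nonneg _)) (by positivity))

theorem stmt_1_general (d : ℕ) (Cl Cu : ℝ) (hCl : 0 < Cl) :
    ∃ c > (0 : ℝ), ∀ p0 : EuclideanSpace ℝ (Fin d) → ℝ,
      Measurable p0 →
      (∀ u : EuclideanSpace ℝ (Fin d), (∃ i, 1 < |u i|) → p0 u = 0) →
      (∀ u : EuclideanSpace ℝ (Fin d), (∀ i, |u i| ≤ 1) → Cl ≤ p0 u ∧ p0 u ≤ Cu) →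
      ∀ t ∈ Set.Ioo (0 : ℝ) 1, ∀ y : EuclideanSpace ℝ (Fin d),
        c * Real.exp (-(d : ℝ) * (max ((⨆ i, |y i|) - (1 - t)) 0) ^ 2 / (t * (2 - t)))
          ≤ ∫ u : EuclideanSpace ℝ (Fin d),
              p0 u * ((2 * π * (t * (2 - t))) ^ (-(d : ℝ) / 2) *
                Real.exp (-‖y - (1 - t) • u‖ ^ 2 / (2 * (t * (2 - t))))) := by
  refine ⟨Cl * (2 * π) ^ (-(d : ℝ) / 2) * exp (-d), by positivity, ?_⟩
  rintro p0 hp0 hzero hbd t ⟨ht₀, ht₁⟩ y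
  set s := t * (2 - t)
  set A := (2 * π * s) ^ (-(d : ℝ) / 2)
  have hs : 0 < s := mul_pos ht₀ (by linarith)
  have hp0_nonneg : ∀ u, 0 ≤ p0 u := fun u => by
    by_cases hu : ∀ i, |u i| ≤ 1
    · exact hCl.le.trans (hbd u hu).1
    · push Not at hu; exact (hzero u hu).ge
  have hint := (EuclideanSpace.integrable_of_abs_le_of_eq_zero_outside_cube
    hp0.aestronglyMeasurable (C := Cu) (fun u hu => (abs_of_nonneg (hp0_nonneg u)).trans_le
      (hbd u hu).2) hzero).mul_gaussianKernel y (1 - t) A hs.le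
  obtain ⟨a, ha⟩ := EuclideanSpace.exists_box_subset_cube_exp_le y (sub_pos.2 ht₁) (by linarith)
    hs (by nlinarith)
  have hvol := EuclideanSpace.volume_preimage_ofLp_pi_Icc_add a √s
  rw [Fintype.card_fin] at ha hvol
  calc _ = Cl * A * (exp (-d * max ((⨆ i, |y i|) - (1 - t)) 0 ^ 2 / s) * exp (-d)) *
        volume.real (WithLp.ofLp ⁻¹' univ.pi fun i => Icc (a i) (a i + √s)) := by
        rw [measureReal_def, hvol, ENNReal.toReal_pow, ENNReal.toReal_ofReal (sqrt_nonneg s),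
          ← mul_sqrt_pow_rpow_neg_div_two (by positivity) hs d]
        ring
    _ ≤ _ := mul_measureReal_le_integral_of_le_on hint
        (.of_forall fun u => mul_nonneg (hp0_nonneg u) (by positivity))
        ((MeasurableSet.univ_pi fun _ => measurableSet_Icc).preimage (by fun_prop))
        (hvol ▸ ENNReal.pow_ne_top ENNReal.ofReal_ne_top) fun u hu => by
          rw [mul_assoc]
          exact mul_le_mul (hbd u (ha u hu).1).1 (by gcongr; exact (ha u hu).2) (by positivity)
            (hp0_nonneg u)

/-- **Lower Gaussian-type bound on the diffused density.**
There is `c > 0` depending only on `d` and `C_l` with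
`p_t(y) ≥ c exp(-d ((‖y‖_∞ - m_t)₊)²/σ_t²)`. -/
theorem stmt_1 (d : ℕ) (hd : 1 ≤ d) (Cl Cu : ℝ) (hCl : 0 < Cl) (hClCu : Cl ≤ Cu) :
    ∃ c > (0 : ℝ), ∀ p0 : EuclideanSpace ℝ (Fin d) → ℝ,
      Measurable p0 →
      (∀ u : EuclideanSpace ℝ (Fin d), (∃ i, 1 < |u i|) → p0 u = 0) →
      (∀ u : EuclideanSpace ℝ (Fin d), (∀ i, |u i| ≤ 1) → Cl ≤ p0 u ∧ p0 u ≤ Cu) →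
      ∀ t ∈ Set.Ioo (0 : ℝ) 1, ∀ y : EuclideanSpace ℝ (Fin d),
        c * Real.exp (-(d : ℝ) * (max ((⨆ i, |y i|) - (1 - t)) 0) ^ 2 / (t * (2 - t)))
          ≤ ∫ u : EuclideanSpace ℝ (Fin d),
              p0 u * ((2 * π * (t * (2 - t))) ^ (-(d : ℝ) / 2) *
                Real.exp (-‖y - (1 - t) • u‖ ^ 2 / (2 * (t * (2 - t))))) :=
  stmt_1_general d Cl Cu hCl
end

section
/- For every multi-index α ∈ ℕ^d there exist constants C ≥ 1 and C′ > 0, depending only on d, C_u and α, such that for every ε ∈ (0, e^{−1}), every t ∈ (0,1) and every y ∈ ℝ^d, | ∫_{ℝ^d} g(u) du − ∫_{A_y} g(u) du | ≤ C′ · ε, where g(u) := (∏_{i=1}^d ((y_i − m_t u_i)/σ_t)^{α_i}) · (2π σ_t²)^{−d/2} · p₀(u) · exp(−‖y − m_t u‖²/(2σ_t²)) and A_y := ∏_{i=1}^d [ (y_i − C σ_t √(log(1/ε)))/m_t , (y_i + C σ_t √(log(1/ε)))/m_t ]. -/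
open MeasureTheory Real Set
open scoped Nat

/-!
Write `w = y - m u`. Each monomial `|w_i / σ|^{α_i}` is absorbed by half of the Gaussian
exponent, via `|x|^k e^{-x²/4} ≤ 1 + 4^k k!`, leaving `e^{-‖w‖²/(4σ²)}`. Off the box `A_y` some
coordinate of `w` exceeds `3σ√(log 1/ε)`, so `e^{-‖w‖²/(4σ²)} ≤ ε e^{-‖w‖²/(8σ²)}`; as `p₀` lives
on the cube, it remains to show `(2πσ²)^{-d/2} ∫_{[-1,1]^d} e^{-‖w‖²/(8σ²)} du ≤ 4^d`. Since
`m² + σ² = 1`, either `m ≥ 1/2` and the full Gaussian integral `m^{-d} (8πσ²)^{d/2}` is small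
enough, or `2πσ² ≥ 1` and the volume `2^d` of the cube is.
-/

lemma abs_pow_mul_exp_neg_sq_div_four_le (k : ℕ) (x : ℝ) :
    |x| ^ k * exp (-x ^ 2 / 4) ≤ 1 + 4 ^ k * k ! := by
  have hsq : |x| ^ k ≤ 1 + (|x| ^ k) ^ 2 := by
    nlinarith [sq_nonneg (|x| ^ k - 1), pow_nonneg (abs_nonneg x) k]
  have hpow : |x| ^ k ≤ 1 + 4 ^ k * k ! * exp (x ^ 2 / 4) :=
    calc |x| ^ k ≤ 1 + (|x| ^ k) ^ 2 := hsq
      _ = 1 + 4 ^ k * k ! * ((x ^ 2 / 4) ^ k / k !) := by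
          rw [← pow_mul, mul_comm k 2, pow_mul, sq_abs, div_pow]
          field_simp
      _ ≤ 1 + 4 ^ k * k ! * exp (x ^ 2 / 4) := by
          gcongr
          exact pow_div_factorial_le_exp _ (by positivity) k
  have hexp : exp (x ^ 2 / 4) * exp (-x ^ 2 / 4) = 1 := by rw [← exp_add]; ring_nf; exact exp_zero
  have hle : exp (-x ^ 2 / 4) ≤ 1 := exp_le_one_iff.2 (by nlinarith [sq_nonneg x])
  calc |x| ^ k * exp (-x ^ 2 / 4) ≤ (1 + 4 ^ k * k ! * exp (x ^ 2 / 4)) * exp (-x ^ 2 / 4) := by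
        gcongr
    _ = exp (-x ^ 2 / 4) + 4 ^ k * k ! := by rw [add_mul, mul_assoc, hexp]; ring
    _ ≤ 1 + 4 ^ k * k ! := by gcongr

lemma exp_neg_div_four_mul_le {s L r : ℝ} (hs : 0 < s) (hr : 8 * s * L ≤ r) :
    exp (-r / (4 * s)) ≤ exp (-L) * exp (-(8 * s)⁻¹ * r) := by
  rw [← exp_add, exp_le_exp]
  have hL : L ≤ r / (8 * s) := by rw [le_div_iff₀ (by positivity)]; linarith
  have hsplit : r / (4 * s) = r / (8 * s) + r / (8 * s) := by field_simp; ring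
  rw [neg_div, hsplit, neg_mul, ← div_eq_inv_mul]
  linarith

lemma abs_integral_sub_setIntegral_le {X : Type*} [MeasurableSpace X] {μ : Measure X}
    {f G : X → ℝ} {S : Set X} (hS : MeasurableSet S) (hf : Integrable f μ) (hG : Integrable G μ)
    (hG_nonneg : 0 ≤ G) (hfG : ∀ x ∉ S, |f x| ≤ G x) :
    |∫ x, f x ∂μ - ∫ x in S, f x ∂μ| ≤ ∫ x, G x ∂μ := by
  rw [← integral_add_compl hS hf, add_sub_cancel_left]
  calc ‖∫ x in Sᶜ, f x ∂μ‖ ≤ ∫ x in Sᶜ, G x ∂μ :=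
        norm_integral_le_of_norm_le hG.integrableOn (ae_restrict_of_forall_mem hS.compl hfG)
    _ ≤ ∫ x, G x ∂μ := setIntegral_le_integral hG (Filter.Eventually.of_forall hG_nonneg)

section InnerProductSpace

variable {V : Type*} [NormedAddCommGroup V] [InnerProductSpace ℝ V] [FiniteDimensional ℝ V]
  [MeasurableSpace V] [BorelSpace V]

lemma integral_exp_neg_mul_norm_sub_smul_sq {b m : ℝ} (hb : 0 < b) (hm : 0 < m) (y : V) :
    ∫ u : V, exp (-b * ‖y - m • u‖ ^ 2) =
      (m ^ Module.finrank ℝ V)⁻¹ * (π / b) ^ (Module.finrank ℝ V / 2 : ℝ) := by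
  rw [Measure.integral_comp_smul_of_nonneg volume (fun v => exp (-b * ‖y - v‖ ^ 2)) m (hR := hm.le),
    integral_sub_left_eq_self (fun v => exp (-b * ‖v‖ ^ 2)) volume y,
    GaussianFourier.integral_rexp_neg_mul_sq_norm hb, smul_eq_mul]

lemma integrable_exp_neg_mul_norm_sub_smul_sq {b m : ℝ} (hb : 0 < b) (hm : 0 < m) (y : V) :
    Integrable fun u : V => exp (-b * ‖y - m • u‖ ^ 2) := by
  refine Integrable.of_integral_ne_zero ?_
  rw [integral_exp_neg_mul_norm_sub_smul_sq hb hm y]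
  positivity

end InnerProductSpace

section EuclideanSpace

variable {ι : Type*} [Fintype ι]

lemma prod_abs_pow_mul_exp_neg_norm_sq_le (α : ι → ℕ) (v : EuclideanSpace ℝ ι) :
    (∏ i, |v i| ^ α i) * exp (-‖v‖ ^ 2 / 4) ≤ ∏ i, (1 + 4 ^ α i * (α i)! : ℝ) := by
  rw [EuclideanSpace.real_norm_sq_eq, neg_div, Finset.sum_div, ← Finset.sum_neg_distrib,
    exp_sum, ← Finset.prod_mul_distrib]
  gcongr with i
  simpa [neg_div] using abs_pow_mul_exp_neg_sq_div_four_le (α i) (v i)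

lemma abs_prod_div_sqrt_pow_mul_exp_le (α : ι → ℕ) {s : ℝ} (hs : 0 < s)
    (w : EuclideanSpace ℝ ι) :
    |∏ i, (w i / √s) ^ α i| * exp (-‖w‖ ^ 2 / (2 * s)) ≤
      (∏ i, (1 + 4 ^ α i * (α i)! : ℝ)) * exp (-‖w‖ ^ 2 / (4 * s)) := by
  set v : EuclideanSpace ℝ ι := (√s)⁻¹ • w
  have hv : ∀ i, v i = w i / √s := fun i => by simp [v, div_eq_inv_mul]
  have hnorm : ‖v‖ ^ 2 = ‖w‖ ^ 2 / s := by
    rw [norm_smul, mul_pow, norm_inv, norm_of_nonneg (sqrt_nonneg s), inv_pow, sq_sqrt hs.le,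
      inv_mul_eq_div]
  have hsplit : exp (-‖w‖ ^ 2 / (2 * s)) = exp (-‖v‖ ^ 2 / 4) * exp (-‖w‖ ^ 2 / (4 * s)) := by
    rw [← exp_add, hnorm]; congr 1; field_simp; ring
  rw [hsplit, ← mul_assoc, Finset.abs_prod]
  simp_rw [abs_pow, ← hv]
  gcongr
  exact prod_abs_pow_mul_exp_neg_norm_sq_le α v

lemma sq_le_norm_sub_smul_sq_of_notMem_box {c m : ℝ} (hc : 0 ≤ c) (hm : 0 < m)
    {y u : EuclideanSpace ℝ ι}
    (hu : u ∉ {u : EuclideanSpace ℝ ι | ∀ i, u i ∈ Icc ((y i - c) / m) ((y i + c) / m)}) :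
    c ^ 2 ≤ ‖y - m • u‖ ^ 2 := by
  simp only [mem_ofPred_eq, not_forall, mem_Icc, not_and_or, not_le, lt_div_iff₀ hm,
    div_lt_iff₀ hm] at hu
  obtain ⟨i, hi⟩ := hu
  have hci : c ≤ |y i - m * u i| := by
    rcases hi with hi | hi
    · exact (by linarith : c ≤ y i - m * u i).trans (le_abs_self _)
    · exact (by linarith : c ≤ -(y i - m * u i)).trans (neg_le_abs _)
  calc c ^ 2 ≤ (y i - m * u i) ^ 2 := by rw [← sq_abs (y i - m * u i)]; gcongr
    _ ≤ ∑ j, (y j - m * u j) ^ 2 :=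
        Finset.single_le_sum (f := fun j => (y j - m * u j) ^ 2) (fun j _ => sq_nonneg _)
          (Finset.mem_univ i)
    _ = ‖y - m • u‖ ^ 2 := by simp [EuclideanSpace.real_norm_sq_eq]

lemma measurableSet_box (a b : ι → ℝ) :
    MeasurableSet {u : EuclideanSpace ℝ ι | ∀ i, u i ∈ Icc (a i) (b i)} := by
  measurability

lemma measurableSet_cube : MeasurableSet {u : EuclideanSpace ℝ ι | ∀ i, |u i| ≤ 1} := by
  measurability

lemma volume_cube : volume {u : EuclideanSpace ℝ ι | ∀ i, |u i| ≤ 1} = 2 ^ Fintype.card ι := by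
  have hcube : {u : EuclideanSpace ℝ ι | ∀ i, |u i| ≤ 1} =
      (MeasurableEquiv.toLp 2 (ι → ℝ)).symm ⁻¹' univ.pi fun _ => Icc (-1) 1 := by
    ext u
    simp only [mem_ofPred_eq, abs_le, mem_preimage, mem_univ_pi, mem_Icc]
    rfl
  rw [hcube, (EuclideanSpace.volume_preserving_symm_measurableEquiv_toLp ι).measure_preimage
      (MeasurableSet.univ_pi fun _ => measurableSet_Icc).nullMeasurableSet, volume_pi_pi]
  norm_num

lemma setIntegral_cube_exp_neg_mul_le {b : ℝ} (hb : 0 ≤ b) (m : ℝ) (y : EuclideanSpace ℝ ι) :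
    ∫ u in {u : EuclideanSpace ℝ ι | ∀ i, |u i| ≤ 1}, exp (-b * ‖y - m • u‖ ^ 2) ≤
      2 ^ Fintype.card ι := by
  refine (le_norm_self _).trans <|
    (norm_setIntegral_le_of_norm_le_const (C := 1) ?_ fun u _ => ?_).trans_eq ?_
  · rw [volume_cube]; exact ENNReal.pow_lt_top ENNReal.ofNat_lt_top
  · rw [norm_of_nonneg (exp_pos _).le, exp_le_one_iff, neg_mul]
    exact neg_nonpos.2 (by positivity)
  · simp [measureReal_def, volume_cube]

lemma gaussian_mass_cube_le {m s : ℝ} (hm : 0 < m) (hs : 0 < s) (hms : m ^ 2 + s = 1)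
    (y : EuclideanSpace ℝ ι) :
    (2 * π * s) ^ (-(Fintype.card ι : ℝ) / 2) *
      ∫ u in {u : EuclideanSpace ℝ ι | ∀ i, |u i| ≤ 1}, exp (-(8 * s)⁻¹ * ‖y - m • u‖ ^ 2) ≤
      4 ^ Fintype.card ι := by
  have hB : 0 < (2 * π * s) ^ (-(Fintype.card ι : ℝ) / 2) := by positivity
  have hb : 0 < (8 * s)⁻¹ := by positivity
  rcases le_or_gt s 2⁻¹ with hs_small | hs_large
  · have hformula := integral_exp_neg_mul_norm_sub_smul_sq hb hm y
    rw [finrank_euclideanSpace] at hformula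
    have hBformula : (2 * π * s) ^ (-(Fintype.card ι : ℝ) / 2) *
        (π / (8 * s)⁻¹) ^ (Fintype.card ι / 2 : ℝ) = 2 ^ Fintype.card ι := by
      rw [neg_div, rpow_neg (by positivity), ← div_eq_inv_mul,
        ← div_rpow (by positivity) (by positivity),
        show π / (8 * s)⁻¹ / (2 * π * s) = 2 ^ (2 : ℝ) by field_simp; norm_num,
        ← rpow_mul (by norm_num), mul_div_cancel₀ _ two_ne_zero, rpow_natCast]
    have hm_inv : m⁻¹ ≤ 2 := by
      rw [inv_le_comm₀ hm two_pos]; nlinarith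
    calc _ ≤ (2 * π * s) ^ (-(Fintype.card ι : ℝ) / 2) *
            ∫ u, exp (-(8 * s)⁻¹ * ‖y - m • u‖ ^ 2) :=
          mul_le_mul_of_nonneg_left (setIntegral_le_integral
            (integrable_exp_neg_mul_norm_sub_smul_sq hb hm y)
            (Filter.Eventually.of_forall fun u => (exp_pos _).le)) hB.le
      _ = m⁻¹ ^ Fintype.card ι * 2 ^ Fintype.card ι := by
          rw [hformula, mul_left_comm, hBformula, inv_pow]
      _ ≤ 2 ^ Fintype.card ι * 2 ^ Fintype.card ι := by gcongr
      _ = 4 ^ Fintype.card ι := by rw [← mul_pow]; norm_num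
  · have hB_le : (2 * π * s) ^ (-(Fintype.card ι : ℝ) / 2) ≤ 1 :=
      rpow_le_one_of_one_le_of_nonpos (by nlinarith [pi_gt_three])
        (by rw [neg_div]; exact neg_nonpos.2 (by positivity))
    calc _ ≤ 1 * 2 ^ Fintype.card ι := mul_le_mul hB_le (setIntegral_cube_exp_neg_mul_le hb.le m y)
            (setIntegral_nonneg measurableSet_cube fun _ _ => (exp_pos _).le) zero_le_one
      _ ≤ 4 ^ Fintype.card ι := by rw [one_mul]; gcongr; norm_num

-- The integrand `g` of the statement, with `m = m_t` and `s = σ_t²`.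
noncomputable def gaussianMomentIntegrand (α : ι → ℕ) (m s : ℝ) (p : EuclideanSpace ℝ ι → ℝ)
    (y u : EuclideanSpace ℝ ι) : ℝ :=
  (∏ i, ((y i - m * u i) / √s) ^ α i) *
    ((2 * π * s) ^ (-(Fintype.card ι : ℝ) / 2) * (p u * exp (-‖y - m • u‖ ^ 2 / (2 * s))))

lemma measurable_gaussianMomentIntegrand (α : ι → ℕ) (m s : ℝ) {p : EuclideanSpace ℝ ι → ℝ}
    (hp : Measurable p) (y : EuclideanSpace ℝ ι) :
    Measurable (gaussianMomentIntegrand α m s p y) := by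
  unfold gaussianMomentIntegrand
  fun_prop

lemma abs_gaussianMomentIntegrand_le (α : ι → ℕ) {m s Cu : ℝ} (hs : 0 < s)
    {p : EuclideanSpace ℝ ι → ℝ} (hp_out : ∀ u, (∃ i, 1 < |u i|) → p u = 0)
    (hp_bd : ∀ u, |p u| ≤ Cu) (y u : EuclideanSpace ℝ ι) :
    |gaussianMomentIntegrand α m s p y u| ≤ {u : EuclideanSpace ℝ ι | ∀ i, |u i| ≤ 1}.indicator
      (fun u => (∏ i, (1 + 4 ^ α i * (α i)! : ℝ)) * Cu *
        ((2 * π * s) ^ (-(Fintype.card ι : ℝ) / 2) * exp (-‖y - m • u‖ ^ 2 / (4 * s)))) u := by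
  by_cases hu : u ∈ {u : EuclideanSpace ℝ ι | ∀ i, |u i| ≤ 1}
  · have hmoment := abs_prod_div_sqrt_pow_mul_exp_le α hs (y - m • u)
    simp only [PiLp.sub_apply, PiLp.smul_apply, smul_eq_mul] at hmoment
    have hB : 0 < (2 * π * s) ^ (-(Fintype.card ι : ℝ) / 2) := by positivity
    have hCu : 0 ≤ Cu := (abs_nonneg _).trans (hp_bd u)
    rw [indicator_of_mem hu, gaussianMomentIntegrand, abs_mul, abs_mul, abs_mul, abs_of_pos hB,
      abs_of_pos (exp_pos _)]
    calc _ = (2 * π * s) ^ (-(Fintype.card ι : ℝ) / 2) * |p u| *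
            (|∏ i, ((y i - m * u i) / √s) ^ α i| * exp (-‖y - m • u‖ ^ 2 / (2 * s))) := by ring
      _ ≤ (2 * π * s) ^ (-(Fintype.card ι : ℝ) / 2) * Cu *
            ((∏ i, (1 + 4 ^ α i * (α i)! : ℝ)) * exp (-‖y - m • u‖ ^ 2 / (4 * s))) := by
          gcongr
          exact hp_bd u
      _ = _ := by ring
  · have hpu : p u = 0 := hp_out u (by simpa using hu)
    simp [indicator_of_notMem hu, gaussianMomentIntegrand, hpu]

lemma integrable_gaussianMomentIntegrand (α : ι → ℕ) {m s Cu : ℝ} (hs : 0 < s)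
    {p : EuclideanSpace ℝ ι → ℝ} (hp : Measurable p) (hp_out : ∀ u, (∃ i, 1 < |u i|) → p u = 0)
    (hp_bd : ∀ u, |p u| ≤ Cu) (y : EuclideanSpace ℝ ι) :
    Integrable (gaussianMomentIntegrand α m s p y) := by
  refine Integrable.mono' ((integrableOn_const (C := (∏ i, (1 + 4 ^ α i * (α i)! : ℝ)) * Cu *
      ((2 * π * s) ^ (-(Fintype.card ι : ℝ) / 2) * 1)) ?_).integrable_indicator measurableSet_cube)
    (measurable_gaussianMomentIntegrand α m s hp y).aestronglyMeasurable
    (Filter.Eventually.of_forall fun u => ?_)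
  · rw [volume_cube]; exact ENNReal.pow_ne_top ENNReal.ofNat_ne_top
  · refine (abs_gaussianMomentIntegrand_le α hs hp_out hp_bd y u).trans
      (indicator_le_indicator ?_)
    have hCu : 0 ≤ Cu := (abs_nonneg _).trans (hp_bd u)
    gcongr
    exact exp_le_one_iff.2 (by rw [neg_div]; exact neg_nonpos.2 (by positivity))

theorem abs_integral_sub_setIntegral_box_le (α : ι → ℕ) {m s c L Cu : ℝ} (hm : 0 < m)
    (hs : 0 < s) (hms : m ^ 2 + s = 1) (hc : 0 ≤ c) (hcL : 8 * s * L ≤ c ^ 2)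
    {p : EuclideanSpace ℝ ι → ℝ} (hp : Measurable p) (hp_out : ∀ u, (∃ i, 1 < |u i|) → p u = 0)
    (hp_bd : ∀ u, |p u| ≤ Cu) (y : EuclideanSpace ℝ ι) :
    |(∫ u, gaussianMomentIntegrand α m s p y u) -
        ∫ u in {u : EuclideanSpace ℝ ι | ∀ i, u i ∈ Icc ((y i - c) / m) ((y i + c) / m)},
          gaussianMomentIntegrand α m s p y u| ≤
      (∏ i, (1 + 4 ^ α i * (α i)! : ℝ)) * Cu * 4 ^ Fintype.card ι * exp (-L) := by
  set K : ℝ := ∏ i, (1 + 4 ^ α i * (α i)! : ℝ)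
  set B : ℝ := (2 * π * s) ^ (-(Fintype.card ι : ℝ) / 2)
  have hK : 0 ≤ K := by positivity
  have hCu : 0 ≤ Cu := (abs_nonneg _).trans (hp_bd 0)
  have hB : 0 ≤ B := by positivity
  set G : EuclideanSpace ℝ ι → ℝ := {u : EuclideanSpace ℝ ι | ∀ i, |u i| ≤ 1}.indicator
    fun u => exp (-L) * (K * Cu) * (B * exp (-(8 * s)⁻¹ * ‖y - m • u‖ ^ 2))
  have hG_int : Integrable G :=
    ((integrable_exp_neg_mul_norm_sub_smul_sq (by positivity) hm y).const_mul B
      |>.const_mul _).indicator measurableSet_cube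
  have hG_nonneg : 0 ≤ G := fun u => indicator_nonneg (fun _ _ => by positivity) u
  have htail : ∀ u ∉ {u : EuclideanSpace ℝ ι | ∀ i, u i ∈ Icc ((y i - c) / m) ((y i + c) / m)},
      |gaussianMomentIntegrand α m s p y u| ≤ G u := fun u hu =>
    (abs_gaussianMomentIntegrand_le α hs hp_out hp_bd y u).trans <| indicator_le_indicator <|
      calc K * Cu * (B * exp (-‖y - m • u‖ ^ 2 / (4 * s)))
          ≤ K * Cu * (B * (exp (-L) * exp (-(8 * s)⁻¹ * ‖y - m • u‖ ^ 2))) := by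
            gcongr
            exact exp_neg_div_four_mul_le hs
              (hcL.trans (sq_le_norm_sub_smul_sq_of_notMem_box hc hm hu))
        _ = exp (-L) * (K * Cu) * (B * exp (-(8 * s)⁻¹ * ‖y - m • u‖ ^ 2)) := by ring
  calc _ ≤ ∫ u, G u := abs_integral_sub_setIntegral_le (measurableSet_box _ _)
        (integrable_gaussianMomentIntegrand α hs hp hp_out hp_bd y) hG_int hG_nonneg htail
    _ = exp (-L) * (K * Cu) *
          (B * ∫ u in {u : EuclideanSpace ℝ ι | ∀ i, |u i| ≤ 1},
            exp (-(8 * s)⁻¹ * ‖y - m • u‖ ^ 2)) := by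
        rw [integral_indicator measurableSet_cube, integral_const_mul, integral_const_mul]
    _ ≤ exp (-L) * (K * Cu) * 4 ^ Fintype.card ι := by
        gcongr
        exact gaussian_mass_cube_le hm hs hms y
    _ = K * Cu * 4 ^ Fintype.card ι * exp (-L) := by ring

end EuclideanSpace

theorem stmt_3_general (d : ℕ) (Cl Cu : ℝ) (hCl : 0 < Cl) (hClCu : Cl ≤ Cu)
    (α : Fin d → ℕ) :
    ∃ C ≥ (1 : ℝ), ∃ C' > (0 : ℝ), ∀ p0 : EuclideanSpace ℝ (Fin d) → ℝ,
      Measurable p0 →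
      (∀ u : EuclideanSpace ℝ (Fin d), (∃ i, 1 < |u i|) → p0 u = 0) →
      (∀ u : EuclideanSpace ℝ (Fin d), (∀ i, |u i| ≤ 1) → Cl ≤ p0 u ∧ p0 u ≤ Cu) →
      ∀ ε ∈ Set.Ioo (0 : ℝ) (Real.exp (-1)), ∀ t ∈ Set.Ioo (0 : ℝ) 1,
        ∀ y : EuclideanSpace ℝ (Fin d),
        |(∫ u : EuclideanSpace ℝ (Fin d),
              (∏ i, ((y i - (1 - t) * u i) / Real.sqrt (t * (2 - t))) ^ α i) *
                ((2 * π * (t * (2 - t))) ^ (-(d : ℝ) / 2) *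
                  (p0 u * Real.exp (-‖y - (1 - t) • u‖ ^ 2 / (2 * (t * (2 - t))))))) -
            ∫ u in {u : EuclideanSpace ℝ (Fin d) | ∀ i,
                u i ∈ Set.Icc
                  ((y i - C * Real.sqrt (t * (2 - t)) * Real.sqrt (Real.log (1 / ε))) / (1 - t))
                  ((y i + C * Real.sqrt (t * (2 - t)) * Real.sqrt (Real.log (1 / ε))) / (1 - t))},
              (∏ i, ((y i - (1 - t) * u i) / Real.sqrt (t * (2 - t))) ^ α i) *
                ((2 * π * (t * (2 - t))) ^ (-(d : ℝ) / 2) *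
                  (p0 u * Real.exp (-‖y - (1 - t) • u‖ ^ 2 / (2 * (t * (2 - t))))))| ≤ C' * ε := by
  have hCu : 0 < Cu := hCl.trans_le hClCu
  refine ⟨3, by norm_num, (∏ i, (1 + 4 ^ α i * (α i)! : ℝ)) * Cu * 4 ^ d, by positivity, ?_⟩
  rintro p0 hp0 hp0_out hp0_bd ε ⟨hε_pos, hε_lt⟩ t ⟨ht_pos, ht_lt⟩ y
  have hε_le : ε ≤ 1 := hε_lt.le.trans (exp_le_one_iff.2 (by norm_num))
  have hL : 0 ≤ log (1 / ε) := log_nonneg (one_le_one_div hε_pos hε_le)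
  have hs : 0 < t * (2 - t) := by nlinarith
  have hp0_abs : ∀ u, |p0 u| ≤ Cu := fun u => by
    by_cases hu : ∀ i, |u i| ≤ 1
    · obtain ⟨hlow, hup⟩ := hp0_bd u hu
      exact abs_le.2 ⟨by linarith, hup⟩
    · rw [hp0_out u (by simpa using hu), abs_zero]
      exact hCu.le
  have key := abs_integral_sub_setIntegral_box_le α (m := 1 - t) (L := log (1 / ε))
    (by linarith) hs (by ring) (by positivity : 0 ≤ 3 * √(t * (2 - t)) * √(log (1 / ε)))
    (by rw [mul_pow, mul_pow, sq_sqrt hs.le, sq_sqrt hL]; nlinarith) hp0 hp0_out hp0_abs y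
  rw [show exp (-log (1 / ε)) = ε by rw [one_div, log_inv, neg_neg, exp_log hε_pos]] at key
  simpa only [gaussianMomentIntegrand, Fintype.card_fin] using key

/-- **Integral clipping lemma.** For every multi-index `α` there are constants `C ≥ 1`,
`C' > 0` (depending only on `d`, `C_u`, `α`) so that clipping the Gaussian-weighted
moment integral to the box `A_y` changes it by at most `C' ε`. -/
theorem stmt_3 (d : ℕ) (hd : 1 ≤ d) (Cl Cu : ℝ) (hCl : 0 < Cl) (hClCu : Cl ≤ Cu)
    (α : Fin d → ℕ) :
    ∃ C ≥ (1 : ℝ), ∃ C' > (0 : ℝ), ∀ p0 : EuclideanSpace ℝ (Fin d) → ℝ,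
      Measurable p0 →
      (∀ u : EuclideanSpace ℝ (Fin d), (∃ i, 1 < |u i|) → p0 u = 0) →
      (∀ u : EuclideanSpace ℝ (Fin d), (∀ i, |u i| ≤ 1) → Cl ≤ p0 u ∧ p0 u ≤ Cu) →
      ∀ ε ∈ Set.Ioo (0 : ℝ) (Real.exp (-1)), ∀ t ∈ Set.Ioo (0 : ℝ) 1,
        ∀ y : EuclideanSpace ℝ (Fin d),
        |(∫ u : EuclideanSpace ℝ (Fin d),
              (∏ i, ((y i - (1 - t) * u i) / Real.sqrt (t * (2 - t))) ^ α i) *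
                ((2 * π * (t * (2 - t))) ^ (-(d : ℝ) / 2) *
                  (p0 u * Real.exp (-‖y - (1 - t) • u‖ ^ 2 / (2 * (t * (2 - t))))))) -
            ∫ u in {u : EuclideanSpace ℝ (Fin d) | ∀ i,
                u i ∈ Set.Icc
                  ((y i - C * Real.sqrt (t * (2 - t)) * Real.sqrt (Real.log (1 / ε))) / (1 - t))
                  ((y i + C * Real.sqrt (t * (2 - t)) * Real.sqrt (Real.log (1 / ε))) / (1 - t))},
              (∏ i, ((y i - (1 - t) * u i) / Real.sqrt (t * (2 - t))) ^ α i) *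
                ((2 * π * (t * (2 - t))) ^ (-(d : ℝ) / 2) *
                  (p0 u * Real.exp (-‖y - (1 - t) • u‖ ^ 2 / (2 * (t * (2 - t))))))| ≤ C' * ε :=
  stmt_3_general d Cl Cu hCl hClCu α
end

section
/- Let f ∈ H^β([0,1]^D, R). There exists a constant C > 0, depending only on D, β and R, such that for every positive integer M there exist real coefficients c_{m,α}, indexed by m ∈ {0,1,…,M}^D and multi-indices α ∈ ℕ^D with |α|₁ ≤ r, satisfying |c_{m,α}| ≤ R/α!, such that the piecewise polynomial p(x) := Σ_{m ∈ {0,…,M}^D} 1{x ∈ Cell_m} · Σ_{|α|₁ ≤ r} c_{m,α} · (x − m/M)^α satisfies |f(x) − p(x)| ≤ C · M^{−β} for all x ∈ [0,1]^D. -/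
/-!
On the cell with corner `y = m / M`, take for `p` the Taylor polynomial of order `r` of `f` at `y`.
Taylor's theorem with Lagrange remainder along the segment `[y, x]` writes the error as
`(D^r f(ξ) - D^r f(y)) (x - y)^r / r!`, which the Hölder condition bounds by
`R / r! * ‖x - y‖^(r + s) ≤ R / r! * (√D / M)^(r + s)`.
Expanding `D^k f(y) (v, …, v)` in the standard basis, the coefficient of `v^α` is `1 / k!` times a sum
of `k! / α!` entries `D^k f(y) (e_{j₁}, …, e_{j_k})`, one for each word `j` with letter counts `α`;
each entry is bounded by `R`, whence `|c_{m,α}| ≤ R / α!`.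
-/

open MeasureTheory Real Set

noncomputable section

/-- The unit cube `[0,1]^D`. -/
def unitCube (D : ℕ) : Set (EuclideanSpace ℝ (Fin D)) :=
  {x | ∀ i, x i ∈ Set.Icc (0 : ℝ) 1}

lemma unitCube_eq_preimage_pi (D : ℕ) :
    unitCube D = EuclideanSpace.equiv (Fin D) ℝ ⁻¹' Set.univ.pi fun _ => Icc 0 1 := by
  ext x
  simp only [unitCube, mem_preimage, mem_univ_pi]
  rfl

lemma convex_unitCube (D : ℕ) : Convex ℝ (unitCube D) := by
  rw [unitCube_eq_preimage_pi]
  exact (convex_pi fun _ _ => convex_Icc 0 1).linear_preimage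
    (EuclideanSpace.equiv (Fin D) ℝ).toLinearMap

lemma uniqueDiffOn_unitCube (D : ℕ) : UniqueDiffOn ℝ (unitCube D) := by
  rw [unitCube_eq_preimage_pi]
  exact (EuclideanSpace.equiv (Fin D) ℝ).uniqueDiffOn_preimage_iff.2
    (UniqueDiffOn.univ_pi fun _ => uniqueDiffOn_Icc zero_lt_one)

open scoped Nat

section TaylorAlongSegment

variable {E : Type*} [NormedAddCommGroup E] [NormedSpace ℝ E] {S : Set E} {f : E → ℝ} {r : ℕ}

lemma hasDerivWithinAt_iteratedFDerivWithin_add_smul (hf : ContDiffOn ℝ r f S)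
    (hS : UniqueDiffOn ℝ S) {I : Set ℝ} {y v : E} (hI : MapsTo (fun t => y + t • v) I S)
    {k : ℕ} (hk : k < r) {t : ℝ} (ht : t ∈ I) :
    HasDerivWithinAt (fun t => iteratedFDerivWithin ℝ k f S (y + t • v) fun _ => v)
      (iteratedFDerivWithin ℝ (k + 1) f S (y + t • v) fun _ => v) I t := by
  have hline : HasDerivWithinAt (fun t : ℝ => y + t • v) v I t := by
    simpa using ((hasDerivAt_id t).smul_const v).const_add y |>.hasDerivWithinAt
  have hDk := (hf.differentiableOn_iteratedFDerivWithin (by exact_mod_cast hk) hS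
    _ (hI ht)).hasFDerivWithinAt.comp_hasDerivWithinAt t hline hI
  exact (ContinuousMultilinearMap.apply ℝ _ ℝ fun _ => v).hasFDerivAt.comp_hasDerivWithinAt t hDk

lemma iteratedDerivWithin_comp_add_smul (hf : ContDiffOn ℝ r f S) (hS : UniqueDiffOn ℝ S)
    {I : Set ℝ} (hI : UniqueDiffOn ℝ I) {y v : E} (hIS : MapsTo (fun t => y + t • v) I S)
    {k : ℕ} (hk : k ≤ r) {t : ℝ} (ht : t ∈ I) :
    iteratedDerivWithin k (fun t => f (y + t • v)) I t =
      iteratedFDerivWithin ℝ k f S (y + t • v) fun _ => v := by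
  induction k generalizing t with
  | zero => simp
  | succ k ih =>
    have heq : EqOn (iteratedDerivWithin k (fun t => f (y + t • v)) I)
        (fun t => iteratedFDerivWithin ℝ k f S (y + t • v) fun _ => v) I :=
      fun u hu => ih (by omega) hu
    rw [iteratedDerivWithin_succ, derivWithin_congr heq (heq ht)]
    exact (hasDerivWithinAt_iteratedFDerivWithin_add_smul hf hS hIS (by omega) ht).derivWithin
      (hI t ht)

lemma exists_sub_taylor_eq_iteratedFDerivWithin (hf : ContDiffOn ℝ r f S)
    (hS : UniqueDiffOn ℝ S) (hconv : Convex ℝ S) {x y : E} (hx : x ∈ S) (hy : y ∈ S) :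
    ∃ ξ ∈ Icc (0 : ℝ) 1, f x - ∑ k ∈ Finset.range r,
        (k ! : ℝ)⁻¹ * iteratedFDerivWithin ℝ k f S y (fun _ => x - y) =
      (r ! : ℝ)⁻¹ * iteratedFDerivWithin ℝ r f S (y + ξ • (x - y)) fun _ => x - y := by
  cases r with
  | zero => exact ⟨1, right_mem_Icc.2 zero_le_one, by simp⟩
  | succ n =>
    have hseg : MapsTo (fun t : ℝ => y + t • (x - y)) (Icc 0 1) S :=
      fun t ht => hconv.add_smul_sub_mem hy hx ht
    have hI : UniqueDiffOn ℝ (Icc (0 : ℝ) 1) := uniqueDiffOn_Icc zero_lt_one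
    have hderiv {k : ℕ} (hk : k ≤ n + 1) : EqOn
        (iteratedDerivWithin k (fun t : ℝ => f (y + t • (x - y))) (Icc 0 1))
        (fun t => iteratedFDerivWithin ℝ k f S (y + t • (x - y)) fun _ => x - y) (Icc 0 1) :=
      fun t ht => iteratedDerivWithin_comp_add_smul hf hS hI hseg hk ht
    have hline : ContDiff ℝ (n + 1 : ℕ) fun t : ℝ => y + t • (x - y) := by fun_prop
    have hg : ContDiffOn ℝ n (fun t : ℝ => f (y + t • (x - y))) (Icc 0 1) :=
      (hf.comp hline.contDiffOn hseg).of_le (by exact_mod_cast n.le_succ)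
    have hg' : DifferentiableOn ℝ
        (iteratedDerivWithin n (fun t : ℝ => f (y + t • (x - y))) (Icc 0 1)) (Ioo 0 1) :=
      fun t ht => ((hasDerivWithinAt_iteratedFDerivWithin_add_smul hf hS hseg n.lt_succ_self
        (Ioo_subset_Icc_self ht)).differentiableWithinAt.mono Ioo_subset_Icc_self).congr
        (fun u hu => hderiv n.le_succ (Ioo_subset_Icc_self hu))
        (hderiv n.le_succ (Ioo_subset_Icc_self ht))
    obtain ⟨ξ, hξ, hrem⟩ := taylor_mean_remainder_lagrange (x₀ := 0) (x := 1) zero_ne_one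
      (by rwa [uIcc_of_le zero_le_one]) (by rwa [uIcc_of_le zero_le_one, uIoo_of_le zero_le_one])
    simp only [uIcc_of_le zero_le_one, uIoo_of_le zero_le_one] at hrem hξ
    refine ⟨ξ, Ioo_subset_Icc_self hξ, ?_⟩
    rw [taylor_within_apply, hderiv le_rfl (Ioo_subset_Icc_self hξ),
      Finset.sum_congr rfl fun k hk => by
        rw [hderiv (Finset.mem_range.1 hk).le (left_mem_Icc.2 zero_le_one)]] at hrem
    simpa [div_eq_inv_mul] using hrem

theorem abs_sub_taylor_le_of_holder (hf : ContDiffOn ℝ r f S) (hS : UniqueDiffOn ℝ S)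
    (hconv : Convex ℝ S) {s R : ℝ} (hs : 0 ≤ s) (hR : 0 ≤ R)
    (hH : ∀ x ∈ S, ∀ x' ∈ S,
      ‖iteratedFDerivWithin ℝ r f S x - iteratedFDerivWithin ℝ r f S x'‖ ≤ R * ‖x - x'‖ ^ s)
    {x y : E} (hx : x ∈ S) (hy : y ∈ S) :
    |f x - ∑ k ∈ Finset.range (r + 1),
        (k ! : ℝ)⁻¹ * iteratedFDerivWithin ℝ k f S y (fun _ => x - y)| ≤
      R / r ! * (‖x - y‖ ^ r * ‖x - y‖ ^ s) := by
  obtain ⟨ξ, hξ, hT⟩ := exists_sub_taylor_eq_iteratedFDerivWithin hf hS hconv hx hy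
  set z := y + ξ • (x - y)
  have hzy : ‖z - y‖ ^ s ≤ ‖x - y‖ ^ s := by
    refine rpow_le_rpow (norm_nonneg _) ?_ hs
    rw [add_sub_cancel_left, norm_smul, Real.norm_of_nonneg hξ.1]
    exact mul_le_of_le_one_left (norm_nonneg _) hξ.2
  have hdiff : ‖iteratedFDerivWithin ℝ r f S z - iteratedFDerivWithin ℝ r f S y‖ ≤
      R * ‖x - y‖ ^ s :=
    (hH z (hconv.add_smul_sub_mem hy hx hξ) y hy).trans (mul_le_mul_of_nonneg_left hzy hR)
  calc _ = (r ! : ℝ)⁻¹ * ‖(iteratedFDerivWithin ℝ r f S z - iteratedFDerivWithin ℝ r f S y)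
        fun _ => x - y‖ := by
        rw [Finset.sum_range_succ, ← sub_sub, hT, sub_apply, ← mul_sub,
          abs_mul, abs_of_pos (by positivity), Real.norm_eq_abs]
    _ ≤ (r ! : ℝ)⁻¹ * (R * ‖x - y‖ ^ s * ‖x - y‖ ^ r) := by
        gcongr
        simpa using ContinuousMultilinearMap.le_mul_prod_of_opNorm_le_of_le hdiff
          (m := fun _ => x - y) fun _ => le_rfl
    _ = R / r ! * (‖x - y‖ ^ r * ‖x - y‖ ^ s) := by ring

end TaylorAlongSegment

section MonomialExpansion

open Finset

variable {ι : Type*} [Fintype ι]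

lemma MultilinearMap.apply_const_eq_sum_basis {R M N : Type*} [CommSemiring R] [AddCommMonoid M]
    [Module R M] [AddCommMonoid N] [Module R N] {k : ℕ} (b : Module.Basis ι R M)
    (f : MultilinearMap R (fun _ : Fin k => M) N) (v : M) :
    f (fun _ => v) = ∑ j : Fin k → ι, (∏ i, b.repr v (j i)) • f fun i => b (j i) := by
  conv_lhs => rw [← b.sum_repr v]
  rw [f.map_sum]
  exact sum_congr rfl fun j _ => f.map_smul_univ _ _

variable [DecidableEq ι]

def letterCount {k : ℕ} (j : Fin k → ι) (d : ι) : ℕ := #{i | j i = d}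

lemma letterCount_mem_piAntidiag {k : ℕ} (j : Fin k → ι) : letterCount j ∈ univ.piAntidiag k := by
  refine mem_piAntidiag.2 ⟨?_, fun _ _ => mem_univ _⟩
  show ∑ d, letterCount j d = k
  simpa [letterCount] using
    (card_eq_sum_card_fiberwise (s := (univ : Finset (Fin k))) (t := univ) fun i _ => by simp).symm

lemma prod_comp_eq_prod_pow_letterCount {M : Type*} [CommMonoid M] {k : ℕ} (j : Fin k → ι)
    (x : ι → M) : ∏ i, x (j i) = ∏ d, x d ^ letterCount j d := by
  rw [← prod_fiberwise univ j]
  refine prod_congr rfl fun d _ => ?_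
  rw [prod_congr rfl fun i hi => congrArg x (mem_filter.1 hi).2, prod_const]
  rfl

/-- Both sides are the coefficient of `X^α` in `(∑ d, X d) ^ k`. -/
lemma card_letterCount_eq {k : ℕ} {α : ι → ℕ} (hα : ∑ d, α d = k) :
    #{j : Fin k → ι | letterCount j = α} = Nat.multinomial univ α := by
  set a : ι →₀ ℕ := Finsupp.equivFunOnFinite.symm α
  have hexpand : (∑ d, MvPolynomial.X d : MvPolynomial ι ℕ) ^ k =
      ∑ j : Fin k → ι, MvPolynomial.monomial (∑ i, Finsupp.single (j i) 1) 1 := by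
    rw [← Fin.prod_const, prod_univ_sum, Fintype.piFinset_univ]
    simp_rw [MvPolynomial.monomial_sum_one, ← MvPolynomial.X.eq_def]
  have hcount (j : Fin k → ι) : (∑ i, Finsupp.single (j i) 1 = a) ↔ letterCount j = α := by
    rw [← (Finsupp.equivFunOnFinite).injective.eq_iff, Equiv.apply_symm_apply]
    refine Eq.congr_left (funext fun d => ?_)
    simp [letterCount, Finsupp.single_apply]
  have := MvPolynomial.coeff_sum_X_pow_of_fintype (R := ℕ) a k
  rw [hexpand, MvPolynomial.coeff_sum] at this
  simp only [MvPolynomial.coeff_monomial, hcount] at this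
  rw [sum_boole, Nat.cast_id, if_pos (by simpa [a, Finsupp.sum_fintype] using hα),
    Finsupp.multinomial_eq_of_support_subset (subset_univ _)] at this
  simpa [a] using this

lemma MultilinearMap.apply_const_eq_sum_letterCount {R M N : Type*} [CommSemiring R]
    [AddCommMonoid M] [Module R M] [AddCommMonoid N] [Module R N] {k : ℕ}
    (b : Module.Basis ι R M) (f : MultilinearMap R (fun _ : Fin k => M) N) (v : M) :
    f (fun _ => v) = ∑ α ∈ univ.piAntidiag k,
      (∏ d, b.repr v d ^ α d) • ∑ j : Fin k → ι with letterCount j = α, f fun i => b (j i) := by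
  rw [f.apply_const_eq_sum_basis b,
    ← sum_fiberwise_of_maps_to (g := letterCount) fun j _ => letterCount_mem_piAntidiag j]
  refine sum_congr rfl fun α _ => ?_
  rw [smul_sum]
  refine sum_congr rfl fun j hj => ?_
  rw [prod_comp_eq_prod_pow_letterCount, (mem_filter.1 hj).2]

lemma le_of_mem_piAntidiag {k : ℕ} {α : ι → ℕ} (hα : α ∈ univ.piAntidiag k) (d : ι) :
    α d ≤ k :=
  (mem_piAntidiag.1 hα).1 ▸ single_le_sum (fun _ _ => Nat.zero_le _) (mem_univ d)

lemma sum_sum_le_eq_sum_range_sum_piAntidiag {M : Type*} [AddCommMonoid M] (r : ℕ)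
    (F : (ι → ℕ) → M) :
    ∑ α : ι → Fin (r + 1) with ∑ d, (α d : ℕ) ≤ r, F (fun d => α d) =
      ∑ k ∈ range (r + 1), ∑ α ∈ univ.piAntidiag k, F α := by
  rw [← sum_fiberwise_of_maps_to (g := fun α : ι → Fin (r + 1) => ∑ d, (α d : ℕ))
    (t := range (r + 1)) fun α hα => mem_range_succ_iff.2 (mem_filter.1 hα).2]
  refine sum_congr rfl fun k hk => ?_
  have hkr := mem_range_succ_iff.1 hk
  refine sum_nbij' (fun α d => α d) (fun α d => Fin.ofNat (r + 1) (α d)) ?_ ?_ ?_ ?_ fun _ _ => rfl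
  · intro α hα
    simp only [mem_filter] at hα
    simp [mem_piAntidiag, hα.2]
  · intro α hα
    have hle (d : ι) : α d < r + 1 := Nat.lt_succ_of_le ((le_of_mem_piAntidiag hα d).trans hkr)
    simp only [mem_piAntidiag] at hα
    simp [Nat.mod_eq_of_lt (hle _), hα.1, hkr]
  · intro α _
    ext d
    simp
  · intro α hα
    ext d
    simp [Nat.mod_eq_of_lt (Nat.lt_succ_of_le ((le_of_mem_piAntidiag hα d).trans hkr))]

end MonomialExpansion

section MonomialCoeff

open Finset

variable {ι E : Type*} [Fintype ι] [DecidableEq ι] [NormedAddCommGroup E] [NormedSpace ℝ E]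
  (b : Module.Basis ι ℝ E) (G : (k : ℕ) → E [×k]→L[ℝ] ℝ)

/-- The coefficient of `∏ d, v_d ^ α d` in `∑ k, (k !)⁻¹ * G k (v, …, v)`, where `v_d` are the
coordinates of `v` in the basis `b`. -/
def monomialCoeff (α : ι → ℕ) : ℝ :=
  ((∑ d, α d) ! : ℝ)⁻¹ * ∑ j : Fin (∑ d, α d) → ι with letterCount j = α, G _ fun i => b (j i)

lemma monomialCoeff_of_sum_eq {k : ℕ} {α : ι → ℕ} (hα : ∑ d, α d = k) :
    monomialCoeff b G α =
      (k ! : ℝ)⁻¹ * ∑ j : Fin k → ι with letterCount j = α, G k fun i => b (j i) := by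
  subst hα
  rfl

lemma inv_factorial_mul_apply_const_eq_sum_monomialCoeff (k : ℕ) (v : E) :
    (k ! : ℝ)⁻¹ * G k (fun _ => v) =
      ∑ α ∈ univ.piAntidiag k, monomialCoeff b G α * ∏ d, b.repr v d ^ α d := by
  have hexpand := (G k).toMultilinearMap.apply_const_eq_sum_letterCount b v
  rw [ContinuousMultilinearMap.coe_coe] at hexpand
  rw [hexpand, mul_sum]
  refine sum_congr rfl fun α hα => ?_
  rw [monomialCoeff_of_sum_eq b G (mem_piAntidiag.1 hα).1, smul_eq_mul]
  ring

lemma abs_monomialCoeff_le {R : ℝ} (hb : ∀ i, ‖b i‖ ≤ 1) (α : ι → ℕ)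
    (hG : ‖G (∑ d, α d)‖ ≤ R) : |monomialCoeff b G α| ≤ R / ∏ d, ((α d) ! : ℝ) := by
  set k := ∑ d, α d
  have hterm (j : Fin k → ι) : |G k fun i => b (j i)| ≤ R := by
    simpa using (G k).le_mul_prod_of_opNorm_le_of_le hG fun i => hb (j i)
  have hcard : (#{j : Fin k → ι | letterCount j = α} : ℝ) = k ! / ∏ d, ((α d) ! : ℝ) := by
    rw [card_letterCount_eq rfl, eq_div_iff (by positivity), mul_comm]
    exact_mod_cast Nat.multinomial_spec univ α
  calc |monomialCoeff b G α|
      ≤ (k ! : ℝ)⁻¹ * ∑ j : Fin k → ι with letterCount j = α, |G k fun i => b (j i)| := by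
        rw [monomialCoeff, abs_mul, abs_of_pos (by positivity)]
        gcongr
        exact abs_sum_le_sum_abs _ _
    _ ≤ (k ! : ℝ)⁻¹ * (#{j : Fin k → ι | letterCount j = α} * R) := by
        gcongr
        exact (sum_le_sum fun j _ => hterm j).trans_eq (by rw [sum_const, nsmul_eq_mul])
    _ = R / ∏ d, ((α d) ! : ℝ) := by
        rw [hcard]
        field_simp

lemma sum_monomialCoeff_mul_prod_eq_sum_taylor (r : ℕ) (v : E) :
    ∑ α : ι → Fin (r + 1) with ∑ d, (α d : ℕ) ≤ r,
        monomialCoeff b G (fun d => α d) * ∏ d, b.repr v d ^ (α d : ℕ) =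
      ∑ k ∈ range (r + 1), (k ! : ℝ)⁻¹ * G k (fun _ => v) := by
  rw [sum_sum_le_eq_sum_range_sum_piAntidiag r
    fun α => monomialCoeff b G α * ∏ d, b.repr v d ^ α d]
  exact sum_congr rfl fun k _ => (inv_factorial_mul_apply_const_eq_sum_monomialCoeff b G k v).symm

end MonomialCoeff

section Grid

variable {ι : Type*} {M : ℕ}

abbrev gridCell (M : ℕ) (m : ι → ℕ) : Set (EuclideanSpace ℝ ι) :=
  {x | ∀ i, x i ∈ Ioc (((m i : ℝ) - 1) / M) ((m i : ℝ) / M)}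

def gridPoint (M : ℕ) (m : ι → ℕ) : EuclideanSpace ℝ ι :=
  WithLp.toLp 2 fun i => (m i : ℝ) / M

lemma eq_of_mem_gridCell (hM : 0 < M) {m m' : ι → ℕ} {x : EuclideanSpace ℝ ι}
    (hx : x ∈ gridCell M m) (hx' : x ∈ gridCell M m') : m = m' := by
  have hM' : (0 : ℝ) < M := Nat.cast_pos.2 hM
  funext i
  obtain ⟨h₁, h₂⟩ := hx i
  obtain ⟨h₁', h₂'⟩ := hx' i
  rw [div_lt_iff₀ hM'] at h₁ h₁'
  rw [le_div_iff₀ hM'] at h₂ h₂'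
  have : (m i : ℝ) < m' i + 1 := by linarith
  have : (m' i : ℝ) < m i + 1 := by linarith
  norm_cast at *
  omega

lemma exists_mem_gridCell (hM : 0 < M) {x : EuclideanSpace ℝ ι} (hx : ∀ i, x i ∈ Icc (0 : ℝ) 1) :
    ∃ m : ι → Fin (M + 1), x ∈ gridCell M fun i => m i := by
  have hM' : (0 : ℝ) < M := Nat.cast_pos.2 hM
  have hle (i : ι) : ⌈x i * M⌉₊ < M + 1 :=
    Nat.lt_succ_of_le (Nat.ceil_le.2 (mul_le_of_le_one_left hM'.le (hx i).2))
  refine ⟨fun i => ⟨⌈x i * M⌉₊, hle i⟩, fun i => ⟨?_, ?_⟩⟩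
  · rw [div_lt_iff₀ hM', sub_lt_iff_lt_add]
    exact Nat.ceil_lt_add_one (mul_nonneg (hx i).1 hM'.le)
  · rw [le_div_iff₀ hM']
    exact Nat.le_ceil _

lemma norm_sub_gridPoint_le [Fintype ι] {m : ι → ℕ} {x : EuclideanSpace ℝ ι}
    (hx : x ∈ gridCell M m) :
    ‖x - gridPoint M m‖ ≤ √(Fintype.card ι) / M := by
  have hcoord (i : ι) : ‖(x - gridPoint M m) i‖ ^ 2 ≤ (1 / M : ℝ) ^ 2 := by
    obtain ⟨h₁, h₂⟩ := hx i
    rw [sub_div] at h₁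
    have : |(x - gridPoint M m) i| ≤ 1 / M := by
      simp only [gridPoint, WithLp.ofLp_sub, Pi.sub_apply]
      rw [abs_le]
      constructor <;> linarith
    rw [Real.norm_eq_abs]
    exact pow_le_pow_left₀ (abs_nonneg _) this 2
  rw [EuclideanSpace.norm_eq]
  calc √(∑ i, ‖(x - gridPoint M m) i‖ ^ 2) ≤ √(Fintype.card ι * (1 / M : ℝ) ^ 2) := by
        gcongr
        exact (Finset.sum_le_sum fun i _ => hcoord i).trans_eq (by simp)
    _ = √(Fintype.card ι) / M := by
        rw [Real.sqrt_mul (Nat.cast_nonneg _), Real.sqrt_sq (by positivity), mul_one_div]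

lemma sum_indicator_gridCell [Fintype ι] [DecidableEq ι] {N : Type*} [AddCommMonoid N]
    (hM : 0 < M) (P : (ι → Fin (M + 1)) → EuclideanSpace ℝ ι → N) {m₀ : ι → Fin (M + 1)}
    {x : EuclideanSpace ℝ ι} (hx : x ∈ gridCell M fun i => m₀ i) :
    ∑ m : ι → Fin (M + 1), (gridCell M fun i => m i).indicator (P m) x = P m₀ x := by
  rw [Finset.sum_eq_single_of_mem m₀ (Finset.mem_univ _) fun m _ hm => indicator_of_notMem
    (fun hx' => hm (funext fun i => Fin.ext (congrFun (eq_of_mem_gridCell hM hx' hx) i))) _,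
    indicator_of_mem hx]

end Grid

lemma gridPoint_mem_unitCube {D M : ℕ} (m : Fin D → Fin (M + 1)) :
    gridPoint M (fun i => m i) ∈ unitCube D :=
  fun i => ⟨div_nonneg (Nat.cast_nonneg _) (Nat.cast_nonneg _),
    div_le_one_of_le₀ (Nat.cast_le.2 (Nat.lt_succ_iff.1 (m i).2)) (Nat.cast_nonneg _)⟩

/-- **Piecewise polynomial (local Taylor) approximation of a Hölder function:**
for `f` in the Hölder ball `H^β([0,1]^D, R)` with `β = r + s`, there are coefficients
`c_{m,α}` with `|c_{m,α}| ≤ R/α!` such that the piecewise Taylor polynomial on the grid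
of mesh `1/M` approximates `f` uniformly within `C M^{-β}`, with `C` depending only
on `D, β, R`. -/
theorem stmt_12 (D r : ℕ) (hD : 1 ≤ D) (s R : ℝ)
    (hs : s ∈ Set.Ioc (0 : ℝ) 1) (hR : 0 < R) :
    ∃ C > (0 : ℝ), ∀ f : EuclideanSpace ℝ (Fin D) → ℝ,
      ContDiffOn ℝ (r : ℕ∞) f (unitCube D) →
      (∀ k : ℕ, k ≤ r → ∀ x ∈ unitCube D,
        ‖iteratedFDerivWithin ℝ k f (unitCube D) x‖ ≤ R) →
      (∀ x ∈ unitCube D, ∀ x' ∈ unitCube D,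
        ‖iteratedFDerivWithin ℝ r f (unitCube D) x -
            iteratedFDerivWithin ℝ r f (unitCube D) x'‖ ≤ R * ‖x - x'‖ ^ s) →
      ∀ M : ℕ, 0 < M →
        ∃ c : (Fin D → Fin (M + 1)) → (Fin D → Fin (r + 1)) → ℝ,
          (∀ m α, (∑ i, (α i : ℕ)) ≤ r →
            |c m α| ≤ R / ∏ i, ((α i : ℕ).factorial : ℝ)) ∧
          ∀ x ∈ unitCube D,
            |f x - ∑ m : Fin D → Fin (M + 1),
                Set.indicator
                  {x' : EuclideanSpace ℝ (Fin D) | ∀ i,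
                    x' i ∈ Set.Ioc ((((m i : ℕ) : ℝ) - 1) / M) (((m i : ℕ) : ℝ) / M)}
                  (fun x' =>
                    ∑ α ∈ Finset.univ.filter
                        (fun α : Fin D → Fin (r + 1) => (∑ i, (α i : ℕ)) ≤ r),
                      c m α * ∏ i, (x' i - ((m i : ℕ) : ℝ) / M) ^ (α i : ℕ)) x|
              ≤ C * (M : ℝ) ^ (-((r : ℝ) + s)) := by
  obtain ⟨hs, -⟩ := hs
  have hD' : 0 < √(D : ℝ) := Real.sqrt_pos.2 (by exact_mod_cast hD)
  refine ⟨R / r ! * √D ^ ((r : ℝ) + s), by positivity, fun f hf hbound hH M hM => ?_⟩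
  set b := PiLp.basisFun 2 ℝ (Fin D)
  set G := fun (m : Fin D → Fin (M + 1)) k =>
    iteratedFDerivWithin ℝ k f (unitCube D) (gridPoint M fun i => m i)
  refine ⟨fun m α => monomialCoeff b (G m) fun d => α d, fun m α hα => ?_, fun x hx => ?_⟩
  · exact abs_monomialCoeff_le b (G m) (fun i => by simp [b]) _
      (hbound _ hα _ (gridPoint_mem_unitCube m))
  obtain ⟨m₀, hm₀⟩ := exists_mem_gridCell hM hx
  set y := gridPoint M fun i => m₀ i
  rw [sum_indicator_gridCell hM _ hm₀]
  calc _ = |f x - ∑ k ∈ Finset.range (r + 1), (k ! : ℝ)⁻¹ * G m₀ k fun _ => x - y| := by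
        rw [← sum_monomialCoeff_mul_prod_eq_sum_taylor b _ r (x - y)]
        simp [b, y, gridPoint]
    _ ≤ R / r ! * (‖x - y‖ ^ r * ‖x - y‖ ^ s) :=
        abs_sub_taylor_le_of_holder hf (uniqueDiffOn_unitCube D) (convex_unitCube D) hs.le hR.le
          hH hx (gridPoint_mem_unitCube m₀)
    _ = R / r ! * ‖x - y‖ ^ ((r : ℝ) + s) := by
        rw [rpow_add' (norm_nonneg _) (by positivity), rpow_natCast]
    _ ≤ R / r ! * (√D / M) ^ ((r : ℝ) + s) := by
        gcongr
        simpa using norm_sub_gridPoint_le hm₀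
    _ = R / r ! * √D ^ ((r : ℝ) + s) * (M : ℝ) ^ (-((r : ℝ) + s)) := by
        rw [div_rpow hD'.le (Nat.cast_nonneg _), rpow_neg (Nat.cast_nonneg _), div_eq_mul_inv]
        ring
end
end
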